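/- arXiv:math/0101041 — 2 statements merged into one kernel-verified Lean document; each statement's English description precedes it below -/
import Mathlib

section
/- Let K be a Kleene algebra and a, b, c, d ∈ K. Put e = (d + c·a∗·b)∗ and let N be the 2×2 matrix over K with entries N₁₁ = a∗ + a∗·b·e·c·a∗, N₁₂ = a∗·b·e, N₂₁ = e·c·a∗, N₂₂ = e. Then for the 2×2 matrix M with rows (a, b) and (c, d), one has N = M·N + E, where E is the 2×2 identity matrix (with 1 on the diagonal and 0 off the diagonal). In particular, N is the closure of M given by the escalator (block) formula, and it satisfies the matrix identity A∗ = A·A∗ + E. -/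
open Computability

private lemma kstar_unfold {K : Type*} [KleeneAlgebra K] (x : K) :
    x∗ = x * x∗ + 1 := by
  apply le_antisymm
  · apply kstar_le_of_mul_le_right
    · rw [add_eq_sup]; exact le_sup_right
    · rw [mul_add, mul_one, add_eq_sup, add_eq_sup]
      apply sup_le
      · exact le_sup_of_le_left (mul_le_mul_right mul_kstar_le_kstar _)
      · exact le_sup_of_le_left (le_mul_of_one_le_right' one_le_kstar)
  · rw [add_eq_sup]
    exact sup_le mul_kstar_le_kstar one_le_kstar

/-- In a Kleene algebra `K`, for `a b c d : K`, put `e = (d + c·a∗·b)∗` and let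
`N` be the `2 × 2` matrix with entries `N₁₁ = a∗ + a∗·b·e·c·a∗`,
`N₁₂ = a∗·b·e`, `N₂₁ = e·c·a∗`, `N₂₂ = e` (the closure of `M` given by the
escalator/block formula). Then for `M = !![a, b; c, d]` one has
`N = M * N + 1`, where `1` is the `2 × 2` identity matrix. -/
theorem escalator_closure_two_by_two {K : Type*} [KleeneAlgebra K]
    (a b c d : K) :
    (!![a∗ + a∗ * b * (d + c * a∗ * b)∗ * c * a∗, a∗ * b * (d + c * a∗ * b)∗;
        (d + c * a∗ * b)∗ * c * a∗, (d + c * a∗ * b)∗] : Matrix (Fin 2) (Fin 2) K)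
      = (!![a, b; c, d] : Matrix (Fin 2) (Fin 2) K) *
          !![a∗ + a∗ * b * (d + c * a∗ * b)∗ * c * a∗, a∗ * b * (d + c * a∗ * b)∗;
             (d + c * a∗ * b)∗ * c * a∗, (d + c * a∗ * b)∗] + 1 := by
  have ha : a∗ = a * a∗ + 1 := kstar_unfold a
  have he : (d + c * a∗ * b)∗ = (d + c * a∗ * b) * (d + c * a∗ * b)∗ + 1 :=
    kstar_unfold _
  set e := (d + c * a∗ * b)∗ with hedef
  ext i j
  fin_cases i <;> fin_cases j <;>
    simp only [Matrix.mul_apply, Matrix.add_apply, Fin.sum_univ_two,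
      Matrix.cons_val', Matrix.cons_val_zero, Matrix.cons_val_one,
      Matrix.head_cons, Matrix.head_fin_const, Matrix.empty_val',
      Matrix.cons_val_fin_one, Matrix.one_apply_eq,
      Fin.mk_zero, Fin.mk_one, Matrix.of_apply,
      Matrix.one_apply_ne (show (0 : Fin 2) ≠ 1 by decide),
      Matrix.one_apply_ne (show (1 : Fin 2) ≠ 0 by decide), add_zero]
  · have h : a * (a∗ + a∗ * b * e * c * a∗) + b * (e * c * a∗) + 1
        = (a * a∗ + 1) + (a * a∗ + 1) * (b * (e * (c * a∗))) := by
      simp only [mul_add, add_mul, one_mul, mul_assoc]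
      abel
    rw [h, ← ha]
    simp only [mul_assoc]
  · have h : a * (a∗ * b * e) + b * e = (a * a∗ + 1) * (b * e) := by
      simp only [add_mul, one_mul, mul_assoc]
    rw [h, ← ha, mul_assoc]
  · conv_lhs => rw [he]
    simp only [mul_add, add_mul, one_mul, mul_assoc]
    abel
  · conv_lhs => rw [he]
    simp only [add_mul, mul_assoc]
    abel
end

section
/- Let la, ua, lb, ub be real numbers with 0 ≤ la ≤ ua < 1 and 0 ≤ lb ≤ ub. Then the unified solution set Σ = {(1 − a)⁻¹·b | la ≤ a ≤ ua, lb ≤ b ≤ ub} of the interval Bellman equation over ℝ≥0 is exactly the closed interval [(1 − la)⁻¹·lb, (1 − ua)⁻¹·ub]; in particular, Σ is contained in this interval and both of its endpoints belong to Σ. -/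
/-- For reals `0 ≤ la ≤ ua < 1` and `0 ≤ lb ≤ ub`, the unified solution set
`Σ = {(1 - a)⁻¹ * b | a ∈ [la, ua], b ∈ [lb, ub]}` of the interval Bellman
equation over the nonnegative reals is exactly the closed interval
`[(1 - la)⁻¹ * lb, (1 - ua)⁻¹ * ub]`; in particular `Σ` is contained in this
interval and both endpoints belong to `Σ`. -/
theorem interval_bellman_real (la ua lb ub : ℝ)
    (hla : 0 ≤ la) (ha : la ≤ ua) (hua : ua < 1) (hlb : 0 ≤ lb) (hb : lb ≤ ub) :
    Set.image2 (fun a b : ℝ => (1 - a)⁻¹ * b) (Set.Icc la ua) (Set.Icc lb ub)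
      = Set.Icc ((1 - la)⁻¹ * lb) ((1 - ua)⁻¹ * ub) := by
  set S := Set.image2 (fun a b : ℝ => (1 - a)⁻¹ * b) (Set.Icc la ua) (Set.Icc lb ub)
  have hla1 : la < 1 := lt_of_le_of_lt ha hua
  have hLmem : (1 - la)⁻¹ * lb ∈ S :=
    Set.mem_image2_of_mem (Set.mem_Icc.2 ⟨le_refl _, ha⟩) (Set.mem_Icc.2 ⟨le_refl _, hb⟩)
  have hUmem : (1 - ua)⁻¹ * ub ∈ S :=
    Set.mem_image2_of_mem (Set.mem_Icc.2 ⟨ha, le_refl _⟩) (Set.mem_Icc.2 ⟨hb, le_refl _⟩)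
  have hsub : S ⊆ Set.Icc ((1 - la)⁻¹ * lb) ((1 - ua)⁻¹ * ub) := by
    rintro x ⟨a, haIcc, b, hbIcc, rfl⟩
    obtain ⟨ha1, ha2⟩ := haIcc
    obtain ⟨hb1, hb2⟩ := hbIcc
    have hposu : (0:ℝ) < 1 - ua := by linarith
    have hposa : (0:ℝ) < 1 - a := by linarith
    have hposl : (0:ℝ) < 1 - la := by linarith
    have hinv1 : (1 - la)⁻¹ ≤ (1 - a)⁻¹ :=
      one_div (1 - la) ▸ one_div (1 - a) ▸ one_div_le_one_div_of_le hposa (by linarith)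
    have hinv2 : (1 - a)⁻¹ ≤ (1 - ua)⁻¹ :=
      one_div (1 - a) ▸ one_div (1 - ua) ▸ one_div_le_one_div_of_le hposu (by linarith)
    constructor
    · exact mul_le_mul hinv1 hb1 hlb (le_of_lt (inv_pos.2 hposa))
    · exact mul_le_mul hinv2 hb2 (le_trans hlb hb1) (le_of_lt (inv_pos.2 hposu))
  refine le_antisymm hsub ?_
  have hconn : IsPreconnected S := by
    show IsPreconnected (Set.image2 _ _ _); rw [← Set.image_uncurry_prod]
    apply IsPreconnected.image (isPreconnected_Icc.prod isPreconnected_Icc)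
    apply ContinuousOn.mul
    · apply ContinuousOn.inv₀
      · exact (continuous_const.sub continuous_fst).continuousOn
      · rintro ⟨a, b⟩ ⟨⟨_, ha2⟩, _⟩
        have : a < 1 := lt_of_le_of_lt ha2 hua
        simp only [ne_eq]
        intro h; linarith [sub_eq_zero.1 h]
    · exact continuous_snd.continuousOn
  exact hconn.ordConnected.out hLmem hUmem
end
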